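/- arXiv:2102.04495 — 3 statements merged into one kernel-verified Lean document; each statement's English description precedes it below -/
import Mathlib

section
/- Let K be a finite subset of Z_+^n containing the zero multi-index, and let s : K → ℂ with s_0 > 0 (s_0 real and positive). Then there exists a compactly supported non-negative Borel measure μ on ℂ^n such that for every k = (k_1,...,k_n) in K, ∫_{ℂ^n} z_1^{k_1}···z_n^{k_n} dμ(z) = s_k. -/
/-!
Put atoms at the points `ρ • (ζ^{t₁}, …, ζ^{tₙ})`, `t ∈ (ℤ/N)ⁿ`, `ζ = exp(2πi/N)`, with weights
`w t = r / Nⁿ + Re ∑_{m ≠ 0} a_m · conj (χ_m t)`, where `χ_m t = ζ^{m·t}`. There the monomial `z^k`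
equals `ρ^{|k|} χ_k t`, so orthogonality of the characters of `(ℤ/N)ⁿ` turns the `k`-th moment
into `r` for `k = 0` and into `ρ^{|k|} Nⁿ a_k / 2` otherwise, provided `N` exceeds twice every
exponent occurring in `K` (then `χ_k = χ_m` only for `k = m`, and `χ_k χ_m ≠ 1` for `m ≠ 0`).
Taking `a_k = 2 s_k / (Nⁿ ρ^{|k|})` matches the data, and a large radius `ρ` makes the `a_k` small
enough for the weights to be nonnegative.
-/

open MeasureTheory Finset Filter Topology ComplexConjugate

lemma AddChar.map_sum_eq_prod {ι A M : Type*} [AddCommMonoid A] [CommMonoid M] (ψ : AddChar A M)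
    (s : Finset ι) (f : ι → A) : ψ (∑ i ∈ s, f i) = ∏ i ∈ s, ψ (f i) := by
  induction s using Finset.cons_induction with
  | empty => simp
  | cons a s ha ih => rw [sum_cons, prod_cons, map_add_eq_mul, ih]

lemma exists_pos_sum_div_pow_le {ι : Type*} (T : Finset ι) (b : ι → ℝ) {e : ι → ℕ}
    (he : ∀ i ∈ T, e i ≠ 0) {ε : ℝ} (hε : 0 < ε) : ∃ ρ > 0, ∑ i ∈ T, b i / ρ ^ e i ≤ ε := by
  have hlim : Tendsto (fun ρ : ℝ => ∑ i ∈ T, b i / ρ ^ e i) atTop (𝓝 0) := by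
    simpa using tendsto_finsetSum T fun i hi =>
      (tendsto_const_nhds (x := b i)).div_atTop (tendsto_pow_atTop (he i hi))
  exact ((eventually_gt_atTop 0).and (hlim.eventually (ge_mem_nhds hε))).exists

namespace MeasureTheory

variable {α ι : Type*} [MeasurableSpace α] [MeasurableSingletonClass α]

lemma Measure.sum_smul_dirac_range_compl [Countable ι] (c : ι → ENNReal) (x : ι → α) :
    Measure.sum (fun i => c i • Measure.dirac (x i)) (Set.range x)ᶜ = 0 :=
  Measure.sum_apply_eq_zero.2 fun i => by simp [Measure.dirac_apply]

variable [Fintype ι] {E : Type*} [NormedAddCommGroup E] [NormedSpace ℝ E] [CompleteSpace E]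

lemma integral_sum_ofReal_smul_dirac {w : ι → ℝ} (hw : ∀ i, 0 ≤ w i) (x : ι → α) (f : α → E) :
    ∫ a, f a ∂Measure.sum (fun i => ENNReal.ofReal (w i) • Measure.dirac (x i)) =
      ∑ i, w i • f (x i) := by
  rw [integral_sum_dirac_eq_tsum (fun _ => ENNReal.ofReal_ne_top) (Summable.of_finite),
    tsum_fintype]
  simp_rw [ENNReal.toReal_ofReal (hw _)]

end MeasureTheory

section MultiIndex

lemma exists_neZero_forall_two_mul_lt {ι : Type*} [Fintype ι] (K : Finset (ι → ℕ)) :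
    ∃ N, NeZero N ∧ ∀ k ∈ K, ∀ i, 2 * k i < N :=
  ⟨2 * K.sup (fun k => univ.sup k) + 1, inferInstance, fun k hk i => by
    have := (le_sup (mem_univ i)).trans (le_sup (f := fun k => univ.sup k) hk)
    omega⟩

variable {N n : ℕ}

lemma natCast_comp_eq_natCast_comp_iff {k m : Fin n → ℕ} (hk : ∀ i, k i < N)
    (hm : ∀ i, m i < N) : ((↑) ∘ k : Fin n → ZMod N) = (↑) ∘ m ↔ k = m := by
  refine ⟨fun h => funext fun i => ?_, fun h => h ▸ rfl⟩
  have hi := congrFun h i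
  simp only [Function.comp_apply, ZMod.natCast_eq_natCast_iff'] at hi
  rwa [Nat.mod_eq_of_lt (hk i), Nat.mod_eq_of_lt (hm i)] at hi

lemma natCast_comp_eq_zero_iff {k : Fin n → ℕ} (hk : ∀ i, k i < N) :
    ((↑) ∘ k : Fin n → ZMod N) = 0 ↔ k = 0 := by
  have hzero : ((↑) ∘ (0 : Fin n → ℕ) : Fin n → ZMod N) = 0 := funext fun _ => Nat.cast_zero
  rw [← hzero]
  exact natCast_comp_eq_natCast_comp_iff hk fun i => (Nat.zero_le _).trans_lt (hk i)

lemma natCast_comp_add_natCast_comp_ne_zero {k m : Fin n → ℕ} (hkm : ∀ i, k i + m i < N)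
    (hm : m ≠ 0) : ((↑) ∘ k + (↑) ∘ m : Fin n → ZMod N) ≠ 0 := by
  obtain ⟨i, hi⟩ := Function.ne_iff.mp hm
  intro h
  have hdvd : N ∣ k i + m i := by
    simpa [← Nat.cast_add, ZMod.natCast_eq_zero_iff] using congrFun h i
  have := Nat.eq_zero_of_dvd_of_lt hdvd (hkm i)
  exact hi (by rw [Pi.zero_apply]; omega)

end MultiIndex

namespace ZMod

variable {N : ℕ} [NeZero N] {n : ℕ}

lemma sum_stdAddChar_dotProduct (u : Fin n → ZMod N) :
    ∑ t, stdAddChar (u ⬝ᵥ t) = if u = 0 then (N : ℂ) ^ n else 0 := by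
  simp_rw [dotProduct, AddChar.map_sum_eq_prod]
  rw [← Fintype.prod_sum fun i x => stdAddChar (u i * x)]
  simp_rw [mul_comm (u _), AddChar.sum_mulShift _ (isPrimitive_stdAddChar N)]
  simp [ZMod.card, prod_ite_zero, funext_iff]

lemma sum_re_mul_conj_stdAddChar_dotProduct {ι : Type*} (T : Finset ι) (a : ι → ℂ)
    (u : ι → Fin n → ZMod N) (v : Fin n → ZMod N) :
    ∑ t, ((∑ m ∈ T, a m * conj (stdAddChar (u m ⬝ᵥ t))).re : ℂ) * stdAddChar (v ⬝ᵥ t) =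
      (N : ℂ) ^ n / 2 *
        ∑ m ∈ T, ((if v - u m = 0 then a m else 0) + if v + u m = 0 then conj (a m) else 0) := by
  have hpoint (t : Fin n → ZMod N) :
      ((∑ m ∈ T, a m * conj (stdAddChar (u m ⬝ᵥ t))).re : ℂ) * stdAddChar (v ⬝ᵥ t) =
        1 / 2 * ∑ m ∈ T,
          (a m * stdAddChar ((v - u m) ⬝ᵥ t) + conj (a m) * stdAddChar ((v + u m) ⬝ᵥ t)) := by
    simp_rw [Complex.re_eq_add_conj, map_sum, map_mul, Complex.conj_conj,
      ← AddChar.map_neg_eq_conj, ← sum_add_distrib, add_dotProduct, sub_dotProduct,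
      sub_eq_add_neg, AddChar.map_add_eq_mul]
    rw [div_mul_eq_mul_div, sum_mul, one_div_mul_eq_div]
    congr 1
    exact sum_congr rfl fun m _ => by ring
  simp_rw [hpoint, ← mul_sum]
  rw [sum_comm]
  simp_rw [sum_add_distrib, ← mul_sum, sum_stdAddChar_dotProduct]
  simp only [mul_add, mul_sum]
  congr 1 <;> exact sum_congr rfl fun m _ => by split_ifs <;> ring

lemma add_re_sum_mul_conj_stdAddChar_nonneg {ι : Type*} {T : Finset ι} {a : ι → ℂ} {c : ℝ}
    (hc : ∑ m ∈ T, ‖a m‖ ≤ c) (u : ι → Fin n → ZMod N) (t : Fin n → ZMod N) :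
    0 ≤ c + (∑ m ∈ T, a m * conj (stdAddChar (u m ⬝ᵥ t))).re := by
  have hre : -∑ m ∈ T, ‖a m‖ ≤ (∑ m ∈ T, a m * conj (stdAddChar (u m ⬝ᵥ t))).re :=
    calc -∑ m ∈ T, ‖a m‖ = -∑ m ∈ T, ‖a m * conj (stdAddChar (u m ⬝ᵥ t))‖ := by
          simp [AddChar.norm_apply]
      _ ≤ -‖∑ m ∈ T, a m * conj (stdAddChar (u m ⬝ᵥ t))‖ := neg_le_neg (norm_sum_le _ _)
      _ ≤ _ := neg_le_of_abs_le (Complex.abs_re_le_norm _)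
  linarith

lemma sum_re_mul_conj_stdAddChar_natCast_comp {K : Finset (Fin n → ℕ)}
    (hK : ∀ k ∈ K, ∀ i, 2 * k i < N) (c : ℝ) (a : (Fin n → ℕ) → ℂ) {k : Fin n → ℕ}
    (hk : k ∈ K) :
    ∑ t, ((c + (∑ m ∈ K.erase 0,
        a m * conj (stdAddChar (((↑) ∘ m : Fin n → ZMod N) ⬝ᵥ t))).re : ℝ) : ℂ) *
        stdAddChar (((↑) ∘ k : Fin n → ZMod N) ⬝ᵥ t) =
      if k = 0 then (c : ℂ) * N ^ n else N ^ n / 2 * a k := by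
  have hlt : ∀ m ∈ K, ∀ i, m i < N := fun m hm i => by have := hK m hm i; omega
  have hterm : ∀ m ∈ K.erase 0,
      ((if ((↑) ∘ k - (↑) ∘ m : Fin n → ZMod N) = 0 then a m else 0) +
        if ((↑) ∘ k + (↑) ∘ m : Fin n → ZMod N) = 0 then conj (a m) else 0) =
      if k = m then a m else 0 := by
    intro m hm
    obtain ⟨hm0, hmK⟩ := mem_erase.1 hm
    have hsum : ∀ i, k i + m i < N := fun i => by have := hK k hk i; have := hK m hmK i; omega
    simp only [sub_eq_zero, natCast_comp_eq_natCast_comp_iff (hlt k hk) (hlt m hmK),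
      natCast_comp_add_natCast_comp_ne_zero hsum hm0, if_false, add_zero]
  simp_rw [Complex.ofReal_add, add_mul, sum_add_distrib, ← mul_sum, sum_stdAddChar_dotProduct,
    sum_re_mul_conj_stdAddChar_dotProduct, natCast_comp_eq_zero_iff (hlt k hk)]
  rw [sum_congr rfl hterm, sum_ite_eq]
  by_cases hk0 : k = 0 <;> simp [hk0, hk]

end ZMod

section Torus

variable {n : ℕ} (N : ℕ) [NeZero N]

noncomputable def torusPoint (ρ : ℂ) (t : Fin n → ZMod N) : Fin n → ℂ :=
  fun i => ρ * ZMod.stdAddChar (t i)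

noncomputable def torusMeasure (ρ : ℂ) (w : (Fin n → ZMod N) → ℝ) :
    Measure (Fin n → ℂ) :=
  Measure.sum fun t => ENNReal.ofReal (w t) • Measure.dirac (torusPoint N ρ t)

variable {N}

lemma prod_torusPoint_pow (ρ : ℂ) (t : Fin n → ZMod N) (k : Fin n → ℕ) :
    ∏ i, torusPoint N ρ t i ^ k i =
      ρ ^ (∑ i, k i) * ZMod.stdAddChar (((↑) ∘ k : Fin n → ZMod N) ⬝ᵥ t) := by
  simp_rw [torusPoint, mul_pow, prod_mul_distrib, prod_pow_eq_pow_sum, dotProduct,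
    AddChar.map_sum_eq_prod, Function.comp_apply, ← nsmul_eq_mul, AddChar.map_nsmul_eq_pow]

lemma torusMeasure_range_compl (ρ : ℂ) (w : (Fin n → ZMod N) → ℝ) :
    torusMeasure N ρ w (Set.range (torusPoint N ρ))ᶜ = 0 :=
  Measure.sum_smul_dirac_range_compl _ _

lemma integrable_torusMeasure (ρ : ℂ) (w : (Fin n → ZMod N) → ℝ) (f : (Fin n → ℂ) → ℂ) :
    Integrable f (torusMeasure N ρ w) :=
  integrable_sum_dirac (fun _ => ENNReal.ofReal_ne_top) (Summable.of_finite)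

lemma integral_monomial_torusMeasure (ρ : ℂ) {w : (Fin n → ZMod N) → ℝ} (hw : ∀ t, 0 ≤ w t)
    (k : Fin n → ℕ) :
    ∫ z, ∏ i, z i ^ k i ∂torusMeasure N ρ w =
      ρ ^ (∑ i, k i) * ∑ t, (w t : ℂ) * ZMod.stdAddChar (((↑) ∘ k : Fin n → ZMod N) ⬝ᵥ t) := by
  simp_rw [torusMeasure, integral_sum_ofReal_smul_dirac hw, prod_torusPoint_pow, mul_sum,
    Complex.real_smul]
  exact sum_congr rfl fun t _ => by ring

end Torus

theorem truncated_moment_problem_Cn_sufficiency_general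
    (n : ℕ) (K : Finset (Fin n → ℕ)) (s : (Fin n → ℕ) → ℂ)
    (hs0 : ∃ r : ℝ, 0 < r ∧ s 0 = (r : ℂ)) :
    ∃ μ : Measure (Fin n → ℂ),
      (∃ S : Set (Fin n → ℂ), IsCompact S ∧ μ Sᶜ = 0) ∧
      ∀ k ∈ K,
        Integrable (fun z : Fin n → ℂ => ∏ i, z i ^ k i) μ ∧
        ∫ z : Fin n → ℂ, ∏ i, z i ^ k i ∂μ = s k := by
  obtain ⟨r, hr, hs0⟩ := hs0
  obtain ⟨N, _, hK⟩ := exists_neZero_forall_two_mul_lt K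
  have hdeg : ∀ m ∈ K.erase 0, ∑ i, m i ≠ 0 := fun m hm hsum =>
    (mem_erase.1 hm).1 (funext fun i => sum_eq_zero_iff.1 hsum i (mem_univ i))
  obtain ⟨ρ, hρ, hρr⟩ := exists_pos_sum_div_pow_le (K.erase 0) (fun m => 2 * ‖s m‖) hdeg hr
  set a : (Fin n → ℕ) → ℂ := fun m => 2 * s m / (N ^ n * ρ ^ ∑ i, m i)
  set w : (Fin n → ZMod N) → ℝ := fun t => r / N ^ n +
    (∑ m ∈ K.erase 0, a m * conj (ZMod.stdAddChar (((↑) ∘ m : Fin n → ZMod N) ⬝ᵥ t))).re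
  have hmass : ∑ m ∈ K.erase 0, ‖a m‖ ≤ r / N ^ n :=
    calc ∑ m ∈ K.erase 0, ‖a m‖ = (∑ m ∈ K.erase 0, 2 * ‖s m‖ / ρ ^ ∑ i, m i) / N ^ n := by
          rw [sum_div]
          refine sum_congr rfl fun m _ => ?_
          simp only [a, norm_div, norm_mul, norm_pow, Complex.norm_ofNat, RCLike.norm_natCast,
            Complex.norm_real, Real.norm_of_nonneg hρ.le]
          ring
      _ ≤ r / N ^ n := by gcongr
  have hw : ∀ t, 0 ≤ w t := fun t => ZMod.add_re_sum_mul_conj_stdAddChar_nonneg hmass _ t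
  refine ⟨torusMeasure N ρ w, ⟨_, (Set.finite_range _).isCompact, torusMeasure_range_compl _ _⟩,
    fun k hk => ⟨integrable_torusMeasure _ _ _, ?_⟩⟩
  rw [integral_monomial_torusMeasure _ hw, ZMod.sum_re_mul_conj_stdAddChar_natCast_comp hK _ _ hk]
  split_ifs with hk0
  · subst hk0
    simp [hs0]
  · have hρ0 : (ρ : ℂ) ≠ 0 := by exact_mod_cast hρ.ne'
    have hN0 : (N : ℂ) ≠ 0 := Nat.cast_ne_zero.2 (NeZero.ne N)
    simp only [a]
    field_simp

theorem truncated_moment_problem_Cn_sufficiency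
    (n : ℕ) (K : Finset (Fin n → ℕ)) (s : (Fin n → ℕ) → ℂ)
    (h0 : (0 : Fin n → ℕ) ∈ K)
    (hs0 : ∃ r : ℝ, 0 < r ∧ s 0 = (r : ℂ)) :
    ∃ μ : Measure (Fin n → ℂ),
      (∃ S : Set (Fin n → ℂ), IsCompact S ∧ μ Sᶜ = 0) ∧
      ∀ k ∈ K,
        Integrable (fun z : Fin n → ℂ => ∏ i, z i ^ k i) μ ∧
        ∫ z : Fin n → ℂ, ∏ i, z i ^ k i ∂μ = s k :=
  truncated_moment_problem_Cn_sufficiency_general n K s hs0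
end

section
/- Let K be a finite subset of Z_+^n containing the zero multi-index and let s : K → ℂ. The truncated moment problem ∫_{ℂ^n} z^k dμ(z) = s_k for all k ∈ K has a solution by a non-negative Borel measure μ on ℂ^n if and only if either s_0 > 0 (real and positive) or s_k = 0 for all k ∈ K. -/
open MeasureTheory Complex Finset
open scoped ComplexConjugate

/-!
Necessity: the moment of `z⁰` is the total mass, which must therefore be finite, and a finite
measure of mass zero is zero.

Sufficiency: on the grid of `N`-th roots of unity in the unit torus of `ℂⁿ`, averaging
`zᵐ z̄ᵏ` gives `δₘₖ` as long as all exponents are below `N`. So the weights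
`r + 2 Re ∑_{k ≠ 0} sₖ z̄ᵏ` reproduce the moments `s` (the terms `z̄ᵏ zᵐ = z^{k+m}·z̄⁰` with
`k ≠ 0` average to zero), and they are nonnegative once `2 ∑_{k ≠ 0} ‖sₖ‖ ≤ r`. A general `s`
is reduced to this case by the dilation `z ↦ R z`, which multiplies the `k`-th moment by `R^|k|`.
-/

theorem sum_range_pow_eq_ite {F : Type*} [Field F] [DecidableEq F] {u : F} {N : ℕ}
    (hu : u ^ N = 1) :
    ∑ j ∈ range N, u ^ j = if u = 1 then (N : F) else 0 := by
  split_ifs with h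
  · simp [h]
  · rw [geom_sum_eq h, hu, sub_self, zero_div]

theorem IsPrimitiveRoot.sum_range_pow_mul_conj_pow {ζ : ℂ} {N : ℕ} (hζ : IsPrimitiveRoot ζ N)
    {a b : ℕ} (ha : a < N) (hb : b < N) :
    ∑ j ∈ range N, (ζ ^ a * conj (ζ ^ b)) ^ j = if a = b then (N : ℂ) else 0 := by
  have hN : N ≠ 0 := by omega
  have hconj : conj (ζ ^ b) = (ζ ^ b)⁻¹ :=
    (inv_eq_conj (by rw [norm_pow, hζ.norm'_eq_one hN, one_pow])).symm
  have hpow : (ζ ^ a * conj (ζ ^ b)) ^ N = 1 := by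
    rw [hconj, mul_pow, inv_pow, ← pow_mul, ← pow_mul, pow_mul', pow_mul' ζ b, hζ.pow_eq_one,
      one_pow, one_pow, inv_one, mul_one]
  rw [sum_range_pow_eq_ite hpow, hconj]
  exact if_congr ((mul_inv_eq_one₀ (pow_ne_zero _ (hζ.ne_zero hN))).trans
    ⟨hζ.pow_inj ha hb, congrArg _⟩) rfl rfl

theorem integrable_finsetSum_ofReal_smul_dirac {α ι E : Type*} [MeasurableSpace α]
    [MeasurableSingletonClass α] [NormedAddCommGroup E] (s : Finset ι) (w : ι → ℝ) (p : ι → α)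
    (g : α → E) : Integrable g (∑ i ∈ s, ENNReal.ofReal (w i) • Measure.dirac (p i)) :=
  integrable_finsetSum_measure.2 fun _ _ =>
    (integrable_dirac enorm_lt_top).smul_measure ENNReal.ofReal_ne_top

theorem integral_finsetSum_ofReal_smul_dirac {α ι E : Type*} [MeasurableSpace α]
    [MeasurableSingletonClass α] [NormedAddCommGroup E] [NormedSpace ℝ E] [CompleteSpace E]
    (s : Finset ι) {w : ι → ℝ} (hw : ∀ i ∈ s, 0 ≤ w i) (p : ι → α) (g : α → E) :
    ∫ a, g a ∂(∑ i ∈ s, ENNReal.ofReal (w i) • Measure.dirac (p i)) = ∑ i ∈ s, w i • g (p i) := by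
  rw [integral_finsetSum_measure fun i _ =>
    (integrable_dirac enorm_lt_top).smul_measure ENNReal.ofReal_ne_top]
  refine sum_congr rfl fun i hi => ?_
  rw [integral_smul_measure, integral_dirac, ENNReal.toReal_ofReal (hw i hi)]

namespace MomentProblem

variable {n : ℕ}

def monomial (k : Fin n → ℕ) (z : Fin n → ℂ) : ℂ := ∏ i, z i ^ k i

theorem monomial_zero : monomial (0 : Fin n → ℕ) = fun _ => 1 := by
  ext; simp [monomial]

theorem monomial_add (k m : Fin n → ℕ) (z : Fin n → ℂ) :
    monomial (k + m) z = monomial k z * monomial m z := by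
  simp only [monomial, Pi.add_apply, pow_add, prod_mul_distrib]

theorem monomial_smul (k : Fin n → ℕ) (c : ℂ) (z : Fin n → ℂ) :
    monomial k (c • z) = c ^ (∑ i, k i) * monomial k z := by
  simp only [monomial, Pi.smul_apply, smul_eq_mul, mul_pow, prod_mul_distrib, prod_pow_eq_pow_sum]

theorem continuous_monomial (k : Fin n → ℕ) : Continuous (monomial k) := by
  unfold monomial; fun_prop

def IsSolution (K : Finset (Fin n → ℕ)) (s : (Fin n → ℕ) → ℂ) (μ : Measure (Fin n → ℂ)) : Prop :=
  ∀ k ∈ K, Integrable (monomial k) μ ∧ ∫ z, monomial k z ∂μ = s k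

variable {K : Finset (Fin n → ℕ)} {s : (Fin n → ℕ) → ℂ} {μ : Measure (Fin n → ℂ)}

theorem isSolution_zero (hs : ∀ k ∈ K, s k = 0) : IsSolution K s 0 :=
  fun k hk => ⟨integrable_zero_measure, by rw [integral_zero_measure, hs k hk]⟩

theorem IsSolution.map_smul (h : IsSolution K s μ) (c : ℂ) :
    IsSolution K (fun k => c ^ (∑ i, k i) * s k) (μ.map (c • ·)) := by
  intro k hk
  have hc : AEMeasurable (c • · : (Fin n → ℂ) → Fin n → ℂ) μ :=
    (continuous_const_smul c).measurable.aemeasurable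
  have hk' := (continuous_monomial k).aestronglyMeasurable (μ := μ.map (c • ·))
  obtain ⟨hint, hval⟩ := h k hk
  refine ⟨(integrable_map_measure hk' hc).2 ?_, ?_⟩
  · simpa only [Function.comp_def, monomial_smul] using hint.const_mul (c ^ (∑ i, k i))
  · rw [integral_map hc hk']
    simp only [monomial_smul, integral_const_mul, hval]

theorem IsSolution.exists_pos_or_eq_zero (h : IsSolution K s μ) (h0 : 0 ∈ K) :
    (∃ r : ℝ, 0 < r ∧ s 0 = r) ∨ ∀ k ∈ K, s k = 0 := by
  obtain ⟨hint, hmass⟩ := h 0 h0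
  simp only [monomial_zero, integral_const] at hint hmass
  have : IsFiniteMeasure μ := (integrable_const_iff.1 hint).resolve_left one_ne_zero
  rcases eq_zero_or_neZero μ with rfl | hμ
  · exact Or.inr fun k hk => by rw [← (h k hk).2, integral_zero_measure]
  · exact Or.inl ⟨μ.real Set.univ, measureReal_univ_pos, by rw [← hmass]; simp⟩

noncomputable def torusPoint (N : ℕ) (x : Fin n → Fin N) : Fin n → ℂ :=
  fun i => exp (2 * Real.pi * I / N) ^ (x i : ℕ)

theorem norm_monomial_torusPoint {N : ℕ} (k : Fin n → ℕ) (x : Fin n → Fin N) :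
    ‖monomial k (torusPoint N x)‖ = 1 := by
  rw [monomial, norm_prod]
  refine prod_eq_one fun i _ => ?_
  rw [torusPoint, norm_pow, norm_pow,
    (isPrimitiveRoot_exp N (x i).pos.ne').norm'_eq_one (x i).pos.ne', one_pow, one_pow]

theorem sum_monomial_torusPoint_mul_conj {N : ℕ} {m k : Fin n → ℕ} (hm : ∀ i, m i < N)
    (hk : ∀ i, k i < N) :
    ∑ x, monomial m (torusPoint N x) * conj (monomial k (torusPoint N x)) =
      if m = k then (N : ℂ) ^ n else 0 := by
  set ζ := exp (2 * Real.pi * I / N)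
  have hterm (x : Fin n → Fin N) :
      monomial m (torusPoint N x) * conj (monomial k (torusPoint N x)) =
        ∏ i, (ζ ^ m i * conj (ζ ^ k i)) ^ (x i : ℕ) := by
    rw [monomial, monomial, map_prod, ← prod_mul_distrib]
    refine prod_congr rfl fun i _ => ?_
    simp only [torusPoint, map_pow]
    ring
  have hζ (i : Fin n) :
      ∑ j : Fin N, (ζ ^ m i * conj (ζ ^ k i)) ^ (j : ℕ) = if m i = k i then (N : ℂ) else 0 := by
    rw [Fin.sum_univ_eq_sum_range fun j => (ζ ^ m i * conj (ζ ^ k i)) ^ j]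
    exact (isPrimitiveRoot_exp N (by have := hm i; omega)).sum_range_pow_mul_conj_pow (hm i) (hk i)
  rw [sum_congr rfl fun x _ => hterm x,
    ← Fintype.prod_sum fun i (j : Fin N) => (ζ ^ m i * conj (ζ ^ k i)) ^ (j : ℕ),
    prod_congr rfl fun i _ => hζ i, Fintype.prod_ite_zero, prod_const, card_univ,
    Fintype.card_fin]
  simp only [← funext_iff]

theorem sum_density_mul_monomial_torusPoint {N : ℕ} (L : Finset (Fin n → ℕ)) (hL : 0 ∉ L)
    (t : (Fin n → ℕ) → ℂ) (r : ℝ) {m : Fin n → ℕ} (hm : ∀ i, m i < N)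
    (hLm : ∀ k ∈ L, ∀ i, k i + m i < N) :
    ∑ x : Fin n → Fin N,
        ((r + 2 * (∑ k ∈ L, t k * conj (monomial k (torusPoint N x))).re : ℝ) : ℂ) *
          monomial m (torusPoint N x) =
      N ^ n * ((if m = 0 then (r : ℂ) else 0) + if m ∈ L then t m else 0) := by
  have h0 : ∀ i, (0 : Fin n → ℕ) i < N := fun i => (Nat.zero_le _).trans_lt (hm i)
  have hpt (x : Fin n → Fin N) :
      ((r + 2 * (∑ k ∈ L, t k * conj (monomial k (torusPoint N x))).re : ℝ) : ℂ) *
          monomial m (torusPoint N x) =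
        r * (monomial m (torusPoint N x) * conj (monomial 0 (torusPoint N x))) +
          ∑ k ∈ L, (t k * (monomial m (torusPoint N x) * conj (monomial k (torusPoint N x))) +
            conj (t k) *
              (monomial (k + m) (torusPoint N x) * conj (monomial 0 (torusPoint N x)))) := by
    simp only [monomial_zero, monomial_add, map_one, mul_one, sum_add_distrib]
    push_cast
    rw [re_eq_add_conj, mul_div_cancel₀ _ two_ne_zero]
    simp only [map_sum, map_mul, conj_conj, add_mul, sum_mul]
    congr 2 <;> refine sum_congr rfl fun k _ => ?_ <;> ring
  have hterm (k : Fin n → ℕ) (hk : k ∈ L) :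
      ∑ x : Fin n → Fin N,
          (t k * (monomial m (torusPoint N x) * conj (monomial k (torusPoint N x))) +
            conj (t k) *
              (monomial (k + m) (torusPoint N x) * conj (monomial 0 (torusPoint N x)))) =
        if m = k then t k * N ^ n else 0 := by
    have hkm : k + m ≠ 0 := fun h => hL (eq_zero_of_add_right h ▸ hk)
    have hk_lt (i : Fin n) : k i < N := (Nat.le_add_right _ _).trans_lt (hLm k hk i)
    rw [sum_add_distrib, ← mul_sum, ← mul_sum, sum_monomial_torusPoint_mul_conj hm hk_lt,
      sum_monomial_torusPoint_mul_conj (m := k + m) (hLm k hk) h0, if_neg hkm, mul_zero,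
      add_zero, mul_ite, mul_zero]
  rw [sum_congr rfl fun x _ => hpt x, sum_add_distrib, ← mul_sum,
    sum_monomial_torusPoint_mul_conj hm h0, sum_comm, sum_congr rfl hterm, sum_ite_eq]
  split_ifs <;> ring

theorem exists_isSolution_of_two_mul_sum_norm_le {r : ℝ} (hs0 : s 0 = r)
    (hsmall : 2 * ∑ k ∈ K.erase 0, ‖s k‖ ≤ r) : ∃ μ, IsSolution K s μ := by
  set M := K.sup fun k => univ.sup k
  have hM {k : Fin n → ℕ} (hk : k ∈ K) (i : Fin n) : k i ≤ M :=
    (le_sup (f := k) (mem_univ i)).trans (le_sup (f := fun k => univ.sup k) hk)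
  set N := 2 * M + 1
  have hN {k m : Fin n → ℕ} (hk : k ∈ K) (hm : m ∈ K) (i : Fin n) : k i + m i < N := by
    have := hM hk i; have := hM hm i; omega
  set w : (Fin n → Fin N) → ℝ := fun x =>
    (r + 2 * (∑ k ∈ K.erase 0, s k * conj (monomial k (torusPoint N x))).re) / N ^ n
  have hw (x : Fin n → Fin N) : 0 ≤ w x := by
    refine div_nonneg ?_ (by positivity)
    have hnorm : ‖∑ k ∈ K.erase 0, s k * conj (monomial k (torusPoint N x))‖ ≤
        ∑ k ∈ K.erase 0, ‖s k‖ :=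
      (norm_sum_le _ _).trans_eq <| sum_congr rfl fun k _ => by
        rw [norm_mul, RCLike.norm_conj, norm_monomial_torusPoint, mul_one]
    linarith [neg_abs_le (∑ k ∈ K.erase 0, s k * conj (monomial k (torusPoint N x))).re,
      abs_re_le_norm (∑ k ∈ K.erase 0, s k * conj (monomial k (torusPoint N x)))]
  refine ⟨∑ x, ENNReal.ofReal (w x) • Measure.dirac (torusPoint N x), fun m hm =>
    ⟨integrable_finsetSum_ofReal_smul_dirac _ _ _ _, ?_⟩⟩
  have hm_lt (i : Fin n) : m i < N := (Nat.le_add_left _ _).trans_lt (hN hm hm i)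
  have hNn : (N : ℂ) ^ n ≠ 0 := pow_ne_zero _ (Nat.cast_ne_zero.2 (2 * M).succ_ne_zero)
  rw [integral_finsetSum_ofReal_smul_dirac _ fun x _ => hw x]
  simp only [w, real_smul, ofReal_div, ofReal_pow, ofReal_natCast, div_mul_eq_mul_div, ← sum_div]
  rw [sum_density_mul_monomial_torusPoint _ (notMem_erase 0 K) s r hm_lt
    fun k hk => hN (mem_of_mem_erase hk) hm, mul_div_cancel_left₀ _ hNn]
  by_cases hm0 : m = 0
  · simp [hm0, hs0]
  · simp [hm0, mem_erase, hm]

theorem exists_isSolution_of_pos {r : ℝ} (hr : 0 < r) (hs0 : s 0 = r) :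
    ∃ μ, IsSolution K s μ := by
  set S := ∑ k ∈ K.erase 0, ‖s k‖
  set R : ℝ := 1 + 2 * S / r
  have hR : 1 ≤ R := le_add_of_nonneg_right (by positivity)
  have hRc : (R : ℂ) ≠ 0 := ofReal_ne_zero.2 (by linarith)
  set t : (Fin n → ℕ) → ℂ := fun k => s k / (R : ℂ) ^ (∑ i, k i)
  have hnorm_t {k : Fin n → ℕ} (hk : k ∈ K.erase 0) : ‖t k‖ ≤ ‖s k‖ / R := by
    have hdeg : 1 ≤ ∑ i, k i := Nat.one_le_iff_ne_zero.2 fun h =>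
      ne_of_mem_erase hk (funext (sum_eq_zero_iff.1 h · (mem_univ _)))
    rw [norm_div, norm_pow, norm_real, Real.norm_of_nonneg (by linarith)]
    exact div_le_div_of_nonneg_left (norm_nonneg _) (by linarith) (le_self_pow₀ hR (by omega))
  have hsmall : 2 * ∑ k ∈ K.erase 0, ‖t k‖ ≤ r :=
    calc 2 * ∑ k ∈ K.erase 0, ‖t k‖ ≤ 2 * S / R := by
          rw [mul_div_assoc, sum_div]; gcongr with k hk; exact hnorm_t hk
      _ ≤ r := by
          rw [div_le_iff₀ (by linarith)]
          have : r * R = r + 2 * S := by simp only [R]; field_simp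
          linarith
  obtain ⟨ν, hν⟩ := exists_isSolution_of_two_mul_sum_norm_le (K := K) (by simp [t, hs0]) hsmall
  refine ⟨ν.map ((R : ℂ) • ·), ?_⟩
  convert hν.map_smul (R : ℂ) using 1
  ext k
  simp only [t, mul_div_cancel₀ _ (pow_ne_zero _ hRc)]

end MomentProblem

theorem truncated_moment_problem_Cn_solvability_iff
    (n : ℕ) (K : Finset (Fin n → ℕ)) (s : (Fin n → ℕ) → ℂ)
    (h0 : (0 : Fin n → ℕ) ∈ K) :
    (∃ μ : Measure (Fin n → ℂ),
      ∀ k ∈ K,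
        Integrable (fun z : Fin n → ℂ => ∏ i, z i ^ k i) μ ∧
        ∫ z : Fin n → ℂ, ∏ i, z i ^ k i ∂μ = s k)
    ↔ ((∃ r : ℝ, 0 < r ∧ s 0 = (r : ℂ)) ∨ ∀ k ∈ K, s k = 0) := by
  refine ⟨fun ⟨μ, hμ⟩ => MomentProblem.IsSolution.exists_pos_or_eq_zero hμ h0, ?_⟩
  rintro (⟨r, hr, hs0⟩ | hs)
  · exact MomentProblem.exists_isSolution_of_pos hr hs0
  · exact ⟨0, MomentProblem.isSolution_zero hs⟩
end

section
/- Let K be a finite subset of Z_+^n containing the zero multi-index, and let M = span{z^k : k ∈ K} be the linear space of complex polynomial functions on ℂ^n spanned by the monomials z^k, k ∈ K. Let L : M → ℂ be a linear functional with L(1) > 0 (real and positive). Then there exists a compactly supported non-negative Borel measure μ on ℂ^n such that L(p) = ∫_{ℂ^n} p(z) dμ(z) for all p ∈ M. -/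
/-!
Put the measure on the grid of points `z_i = R ζ ^ j_i`, where `ζ` is a primitive `N`-th root of
unity and `N > 2 max k_i`. There `z ^ m = R ^ |m| χ_j(m)` with `χ_j(m) = ζ ^ ⟨m, j⟩`, and summing
over the grid, `χ(m) conj χ(k)` and `χ(m + k)` vanish unless `m = k`, resp. `m = k = 0`, because
`m - k` and `m + k` are too short to be nonzero multiples of `N`. Hence the real weights
`1 + ∑_{k ≠ 0} 2 Re (a_k conj χ_j(k))` integrate `χ(m)` to `N ^ n a_m` (to `N ^ n` if `m = 0`), and
they are nonnegative as soon as `∑ 2 |a_k| ≤ 1`. With `a_k = L(z ^ k) / (L(1) R ^ |k|)` this holds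
for large `R`, and rescaling by `L(1) / N ^ n` gives a measure with the moments of `L` on monomials,
hence on their span by linearity.
-/

open MeasureTheory

open scoped NNReal ENNReal ComplexConjugate

theorem IsPrimitiveRoot.sum_fin_zpow_mul {ζ : ℂ} {N : ℕ} (hζ : IsPrimitiveRoot ζ N) (d : ℤ) :
    ∑ t : Fin N, ζ ^ (d * (t : ℕ)) = if (N : ℤ) ∣ d then (N : ℂ) else 0 := by
  simp_rw [zpow_mul, zpow_natCast]
  rw [Fin.sum_univ_eq_sum_range (fun t => (ζ ^ d) ^ t)]
  split_ifs with hd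
  · simp [(hζ.zpow_eq_one_iff_dvd d).2 hd]
  · have hζd : (ζ ^ d) ^ N = 1 := by
      rw [← zpow_natCast, ← zpow_mul, mul_comm, zpow_mul, zpow_natCast, hζ.pow_eq_one, one_zpow]
    rw [geom_sum_eq (mt (hζ.zpow_eq_one_iff_dvd d).1 hd), hζd, sub_self, zero_div]

theorem IsPrimitiveRoot.sum_pi_fin_prod_zpow_mul {ζ : ℂ} {N : ℕ} (hζ : IsPrimitiveRoot ζ N)
    {n : ℕ} (v : Fin n → ℤ) :
    ∑ j : Fin n → Fin N, ∏ i, ζ ^ (v i * (j i : ℕ)) =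
      if ∀ i, (N : ℤ) ∣ v i then (N : ℂ) ^ n else 0 := by
  rw [← Fintype.prod_sum (fun i (t : Fin N) => ζ ^ (v i * (t : ℕ)))]
  simp_rw [hζ.sum_fin_zpow_mul, Fintype.prod_ite_zero, Finset.prod_const, Finset.card_univ,
    Fintype.card_fin]

section Grid

variable {n N : ℕ} {ζ : ℂ}

def gridChar (ζ : ℂ) (j : Fin n → Fin N) (m : Fin n → ℕ) : ℂ := ∏ i, ζ ^ (m i * (j i : ℕ))

theorem gridChar_add (j : Fin n → Fin N) (m k : Fin n → ℕ) :
    gridChar ζ j (m + k) = gridChar ζ j m * gridChar ζ j k := by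
  simp only [gridChar, Pi.add_apply, add_mul, pow_add, Finset.prod_mul_distrib]

theorem norm_gridChar (hζ : ‖ζ‖ = 1) (j : Fin n → Fin N) (m : Fin n → ℕ) :
    ‖gridChar ζ j m‖ = 1 := by
  simp [gridChar, hζ]

theorem prod_gridPoint_pow (R : ℂ) (j : Fin n → Fin N) (m : Fin n → ℕ) :
    ∏ i, (R * ζ ^ (j i : ℕ)) ^ m i = R ^ (∑ i, m i) * gridChar ζ j m := by
  simp only [gridChar, mul_pow, Finset.prod_mul_distrib, Finset.prod_pow_eq_pow_sum, ← pow_mul,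
    mul_comm]

theorem sum_gridChar (hζ : IsPrimitiveRoot ζ N) {m : Fin n → ℕ} (hm : ∀ i, m i < N) :
    ∑ j : Fin n → Fin N, gridChar ζ j m = if m = 0 then (N : ℂ) ^ n else 0 := by
  have := hζ.sum_pi_fin_prod_zpow_mul (fun i => (m i : ℤ))
  simp only [zpow_mul, zpow_natCast] at this
  simp only [gridChar, pow_mul, this]
  refine if_congr ?_ rfl rfl
  simp only [funext_iff, Pi.zero_apply]
  refine forall_congr' fun i => ⟨fun h => ?_, fun h => by simp [h]⟩
  exact_mod_cast Int.eq_zero_of_abs_lt_dvd h (by have := hm i; rw [abs_lt]; omega)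

theorem sum_gridChar_mul_conj (hζ : IsPrimitiveRoot ζ N) (hN : N ≠ 0) {m k : Fin n → ℕ}
    (hm : ∀ i, m i < N) (hk : ∀ i, k i < N) :
    ∑ j : Fin n → Fin N, gridChar ζ j m * conj (gridChar ζ j k) =
      if m = k then (N : ℂ) ^ n else 0 := by
  have hζ0 : ζ ≠ 0 := hζ.ne_zero hN
  have hconj : conj ζ = ζ⁻¹ := (Complex.inv_eq_conj (hζ.norm'_eq_one hN)).symm
  have hterm : ∀ j : Fin n → Fin N, gridChar ζ j m * conj (gridChar ζ j k) =
      ∏ i, ζ ^ (((m i : ℤ) - k i) * (j i : ℕ)) := fun j => by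
    simp only [gridChar, map_prod, map_pow, hconj, ← Finset.prod_mul_distrib, sub_mul,
      zpow_sub₀ hζ0, div_eq_mul_inv, inv_pow]
    norm_cast
  simp only [hterm, hζ.sum_pi_fin_prod_zpow_mul]
  refine if_congr ?_ rfl rfl
  simp only [funext_iff]
  refine forall_congr' fun i => ⟨fun h => ?_, fun h => by simp [h]⟩
  have := Int.eq_zero_of_abs_lt_dvd h (by have := hm i; have := hk i; rw [abs_lt]; omega)
  omega

def gridDensity (ζ : ℂ) (S : Finset (Fin n → ℕ)) (a : (Fin n → ℕ) → ℂ) (j : Fin n → Fin N) : ℝ :=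
  1 + ∑ k ∈ S, 2 * (a k * conj (gridChar ζ j k)).re

theorem gridDensity_nonneg (hζ : ‖ζ‖ = 1) {S : Finset (Fin n → ℕ)} {a : (Fin n → ℕ) → ℂ}
    (ha : ∑ k ∈ S, 2 * ‖a k‖ ≤ 1) (j : Fin n → Fin N) : 0 ≤ gridDensity ζ S a j := by
  have hterm : ∀ k ∈ S, -(2 * ‖a k‖) ≤ 2 * (a k * conj (gridChar ζ j k)).re := fun k _ => by
    have := neg_abs_le (a k * conj (gridChar ζ j k)).re
    have := Complex.abs_re_le_norm (a k * conj (gridChar ζ j k))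
    rw [norm_mul, Complex.norm_conj, norm_gridChar hζ, mul_one] at this
    linarith
  have := Finset.sum_le_sum hterm
  rw [Finset.sum_neg_distrib] at this
  unfold gridDensity
  linarith

theorem ofReal_gridDensity (ζ : ℂ) (S : Finset (Fin n → ℕ)) (a : (Fin n → ℕ) → ℂ)
    (j : Fin n → Fin N) :
    (gridDensity ζ S a j : ℂ) =
      1 + ∑ k ∈ S, (a k * conj (gridChar ζ j k) + conj (a k) * gridChar ζ j k) := by
  have hterm : ∀ k, a k * conj (gridChar ζ j k) + conj (a k) * gridChar ζ j k =
      ((2 * (a k * conj (gridChar ζ j k)).re : ℝ) : ℂ) := fun k => by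
    rw [← Complex.add_conj, map_mul, Complex.conj_conj]
  simp [gridDensity, hterm]

theorem sum_gridDensity_mul_gridChar (hζ : IsPrimitiveRoot ζ N) (hN : N ≠ 0)
    {S : Finset (Fin n → ℕ)} (hS : 0 ∉ S) (a : (Fin n → ℕ) → ℂ) {m : Fin n → ℕ}
    (hm : m = 0 ∨ m ∈ S) (hbound : ∀ k ∈ insert m S, ∀ i, 2 * k i < N) :
    ∑ j : Fin n → Fin N, (gridDensity ζ S a j : ℂ) * gridChar ζ j m =
      (N : ℂ) ^ n * if m = 0 then 1 else a m := by
  have hlt : ∀ k ∈ insert m S, ∀ i, k i < N := fun k hk i => by have := hbound k hk i; omega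
  have hmN := hlt m (Finset.mem_insert_self m S)
  have hconj : ∀ k ∈ S, ∑ j : Fin n → Fin N, gridChar ζ j m * conj (gridChar ζ j k) =
      if m = k then (N : ℂ) ^ n else 0 := fun k hk =>
    sum_gridChar_mul_conj hζ hN hmN (hlt k (Finset.mem_insert_of_mem hk))
  have hsum : ∀ k ∈ S, ∑ j : Fin n → Fin N, gridChar ζ j (m + k) = 0 := fun k hk => by
    have hmk : ∀ i, (m + k) i < N := fun i => by
      have := hbound m (Finset.mem_insert_self m S) i
      have := hbound k (Finset.mem_insert_of_mem hk) i
      simp only [Pi.add_apply]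
      omega
    rw [sum_gridChar hζ hmk]
    exact if_neg fun h : m + k = 0 => hS ((add_eq_zero.1 h).2 ▸ hk)
  calc ∑ j : Fin n → Fin N, (gridDensity ζ S a j : ℂ) * gridChar ζ j m
      = ∑ j : Fin n → Fin N, (gridChar ζ j m + ∑ k ∈ S, (a k * (gridChar ζ j m *
          conj (gridChar ζ j k)) + conj (a k) * gridChar ζ j (m + k))) := by
        refine Finset.sum_congr rfl fun j _ => ?_
        simp only [ofReal_gridDensity, gridChar_add, add_mul, one_mul, Finset.sum_mul]
        congr 1
        exact Finset.sum_congr rfl fun k _ => by ring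
    _ = (∑ j : Fin n → Fin N, gridChar ζ j m) + ∑ k ∈ S,
          (a k * ∑ j : Fin n → Fin N, gridChar ζ j m * conj (gridChar ζ j k) +
            conj (a k) * ∑ j : Fin n → Fin N, gridChar ζ j (m + k)) := by
        simp only [Finset.sum_add_distrib, Finset.mul_sum]
        congr 2 <;> exact Finset.sum_comm
    _ = (if m = 0 then (N : ℂ) ^ n else 0) + ∑ k ∈ S, if m = k then a k * (N : ℂ) ^ n else 0 := by
        rw [sum_gridChar hζ hmN]
        refine congrArg _ (Finset.sum_congr rfl fun k hk => ?_)
        rw [hconj k hk, hsum k hk, mul_zero, add_zero, mul_ite, mul_zero]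
    _ = (N : ℂ) ^ n * if m = 0 then 1 else a m := by
        rw [Finset.sum_ite_eq]
        rcases hm with rfl | hmS
        · simp [hS]
        · simp [hmS, ne_of_mem_of_not_mem hmS hS, mul_comm]

end Grid

open Filter Topology in
theorem exists_pos_sum_div_pow_le_one {ι : Type*} (s : Finset ι) (b : ι → ℝ) (d : ι → ℕ)
    (hd : ∀ i ∈ s, d i ≠ 0) : ∃ R > 0, ∑ i ∈ s, b i / R ^ d i ≤ 1 := by
  have hlim : Tendsto (fun R : ℝ => ∑ i ∈ s, b i / R ^ d i) atTop (𝓝 0) := by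
    simpa [div_eq_mul_inv] using tendsto_finsetSum s fun i hi =>
      ((tendsto_pow_atTop (hd i hi)).inv_tendsto_atTop).const_mul (b i)
  exact ((eventually_gt_atTop 0).and (hlim.eventually (ge_mem_nhds one_pos))).exists

theorem exists_weighted_points_moment_eq {n : ℕ} (K : Finset (Fin n → ℕ)) (w : (Fin n → ℕ) → ℂ)
    {r : ℝ} (hr : 0 < r) (hw0 : w 0 = r) :
    ∃ (N : ℕ) (x : (Fin n → Fin N) → Fin n → ℂ) (c : (Fin n → Fin N) → ℝ≥0),
      ∀ m ∈ K, ∑ j, (c j : ℂ) * ∏ i, x j i ^ m i = w m := by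
  set S := K.erase 0
  set N := 2 * K.sup (fun k => Finset.univ.sup k) + 1
  have hN : N ≠ 0 := Nat.succ_ne_zero _
  have hbound : ∀ k ∈ K, ∀ i, 2 * k i < N := fun k hk i => by
    have : k i ≤ K.sup (fun k => Finset.univ.sup k) :=
      Finset.le_sup_of_le hk (Finset.le_sup (Finset.mem_univ i))
    omega
  obtain ⟨ζ, hζ⟩ : ∃ ζ : ℂ, IsPrimitiveRoot ζ N := ⟨_, Complex.isPrimitiveRoot_exp N hN⟩
  have hdeg : ∀ k ∈ S, ∑ i, k i ≠ 0 := fun k hk h =>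
    Finset.ne_of_mem_erase hk (funext fun i => Finset.sum_eq_zero_iff.1 h i (Finset.mem_univ i))
  obtain ⟨R, hR, hRS⟩ := exists_pos_sum_div_pow_le_one S (fun k => 2 * ‖w k‖ / r) _ hdeg
  set a : (Fin n → ℕ) → ℂ := fun k => w k / (r * R ^ ∑ i, k i)
  have ha : ∑ k ∈ S, 2 * ‖a k‖ ≤ 1 := by
    refine le_of_eq_of_le (Finset.sum_congr rfl fun k _ => ?_) hRS
    simp only [a, norm_div, norm_mul, norm_pow, Complex.norm_real, Real.norm_of_nonneg hr.le,
      Real.norm_of_nonneg hR.le]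
    ring
  refine ⟨N, fun j i => R * ζ ^ (j i : ℕ),
    fun j => ⟨r / N ^ n * gridDensity ζ S a j, by
      have := gridDensity_nonneg (hζ.norm'_eq_one hN) ha j; positivity⟩, fun m hm => ?_⟩
  have hmS : m = 0 ∨ m ∈ S := (em (m = 0)).imp_right fun h => Finset.mem_erase.2 ⟨h, hm⟩
  have hmoment := sum_gridDensity_mul_gridChar hζ hN (Finset.notMem_erase 0 K) a hmS
    fun k hk => hbound k (Finset.insert_subset hm (Finset.erase_subset 0 K) hk)
  have hN' : (N : ℂ) ^ n ≠ 0 := pow_ne_zero _ (Nat.cast_ne_zero.2 hN)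
  calc ∑ j, ((r / N ^ n * gridDensity ζ S a j : ℝ) : ℂ) * ∏ i, (R * ζ ^ (j i : ℕ) : ℂ) ^ m i
      = r / (N : ℂ) ^ n * (R : ℂ) ^ (∑ i, m i) *
          ∑ j, (gridDensity ζ S a j : ℂ) * gridChar ζ j m := by
        simp only [prod_gridPoint_pow, Finset.mul_sum]
        push_cast
        exact Finset.sum_congr rfl fun j _ => by ring
    _ = w m := by
        rw [hmoment]
        rcases hmS with rfl | hmS
        · field_simp
          simp [hw0]
        · have hR' : (R : ℂ) ^ ∑ i, m i ≠ 0 := pow_ne_zero _ (Complex.ofReal_ne_zero.2 hR.ne')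
          rw [if_neg (Finset.ne_of_mem_erase hmS)]
          have hr' : (r : ℂ) ≠ 0 := Complex.ofReal_ne_zero.2 hr.ne'
          simp only [a]
          field_simp

theorem functional_integral_representation_general
    (n : ℕ) (K : Finset (Fin n → ℕ))
    (M : Submodule ℂ ((Fin n → ℂ) → ℂ))
    (hM : M = Submodule.span ℂ
      ((fun k : Fin n → ℕ => fun z : Fin n → ℂ => ∏ i, z i ^ k i) '' (K : Set (Fin n → ℕ))))
    (L : M →ₗ[ℂ] ℂ)
    (h1 : (fun _ : Fin n → ℂ => (1 : ℂ)) ∈ M)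
    (hL1 : ∃ r : ℝ, 0 < r ∧ L ⟨fun _ => 1, h1⟩ = (r : ℂ)) :
    ∃ μ : Measure (Fin n → ℂ),
      (∃ S : Set (Fin n → ℂ), IsCompact S ∧ μ Sᶜ = 0) ∧
      ∀ p : M,
        Integrable (p : (Fin n → ℂ) → ℂ) μ ∧
        ∫ z : Fin n → ℂ, (p : (Fin n → ℂ) → ℂ) z ∂μ = L p := by
  obtain ⟨r, hr, hLr⟩ := hL1
  obtain ⟨g, hg⟩ := LinearMap.exists_extend L
  have hgL (p : M) : g p = L p := LinearMap.congr_fun hg p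
  obtain ⟨N, x, c, hmoment⟩ := exists_weighted_points_moment_eq K
    (fun k => g fun z => ∏ i, z i ^ k i) hr (by simpa [hLr] using hgL ⟨_, h1⟩)
  set Λ : ((Fin n → ℂ) → ℂ) →ₗ[ℂ] ℂ := ∑ j, ((c j : ℝ) : ℂ) • LinearMap.proj (x j)
  have hΛ : Set.EqOn Λ g M := by
    rw [hM]
    refine LinearMap.eqOn_span' ?_
    rintro _ ⟨k, hk, rfl⟩
    simpa [Λ] using hmoment k hk
  refine ⟨Measure.sum fun j => (c j : ℝ≥0∞) • Measure.dirac (x j),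
    ⟨Set.range x, (Set.finite_range x).isCompact, ?_⟩, fun p => ⟨?_, ?_⟩⟩
  · simp [Measure.dirac_apply]
  · exact integrable_sum_dirac (by simp) Summable.of_finite
  · rw [integral_sum_dirac (by simp), tsum_fintype, ← hgL, ← hΛ p.2]
    simp [Λ, Complex.real_smul]

theorem functional_integral_representation
    (n : ℕ) (K : Finset (Fin n → ℕ)) (h0 : (0 : Fin n → ℕ) ∈ K)
    (M : Submodule ℂ ((Fin n → ℂ) → ℂ))
    (hM : M = Submodule.span ℂ
      ((fun k : Fin n → ℕ => fun z : Fin n → ℂ => ∏ i, z i ^ k i) '' (K : Set (Fin n → ℕ))))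
    (L : M →ₗ[ℂ] ℂ)
    (h1 : (fun _ : Fin n → ℂ => (1 : ℂ)) ∈ M)
    (hL1 : ∃ r : ℝ, 0 < r ∧ L ⟨fun _ => 1, h1⟩ = (r : ℂ)) :
    ∃ μ : Measure (Fin n → ℂ),
      (∃ S : Set (Fin n → ℂ), IsCompact S ∧ μ Sᶜ = 0) ∧
      ∀ p : M,
        Integrable (p : (Fin n → ℂ) → ℂ) μ ∧
        ∫ z : Fin n → ℂ, (p : (Fin n → ℂ) → ℂ) z ∂μ = L p :=
  functional_integral_representation_general n K M hM L h1 hL1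
end
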